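/- Let n be a positive integer. If |A_n| = 5 and A_n is in arithmetic progression, then n = 60 (and A_60 = {2, 3, 4, 5, 6}). -/
import Mathlib


/-- The set of nontrivial small divisors of `n`:
divisors `d` of `n` with `1 < d < √n` (equivalently `d ^ 2 < n`). -/
def A (n : ℕ) : Finset ℕ := n.divisors.filter (fun d => 1 < d ∧ d ^ 2 < n)

/-- A finite set `S` of positive integers is in arithmetic progression if there are
positive integers `d` (first term) and `a` (common difference) with
`S = {d + i·a : 0 ≤ i ≤ |S| − 1}`. -/
def IsAP (S : Finset ℕ) : Prop :=
  ∃ d a : ℕ, 0 < d ∧ 0 < a ∧ S = (Finset.range S.card).image (fun i => d + i * a)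

private lemma aux_seven {C : Finset ℕ} {q1 q2 q3 q4 q5 q6 q7 : ℕ}
    (m1 : q1 ∈ C) (m2 : q2 ∈ C) (m3 : q3 ∈ C) (m4 : q4 ∈ C) (m5 : q5 ∈ C)
    (m6 : q6 ∈ C) (m7 : q7 ∈ C)
    (l1 : q1 < q2) (l2 : q2 < q3) (l3 : q3 < q4) (l4 : q4 < q5) (l5 : q5 < q6)
    (l6 : q6 < q7) : 7 ≤ C.card := by
  have hsub : ({q1, q2, q3, q4, q5, q6, q7} : Finset ℕ) ⊆ C := by
    intro x hx
    simp only [Finset.mem_insert, Finset.mem_singleton] at hx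
    rcases hx with rfl | rfl | rfl | rfl | rfl | rfl | rfl <;> assumption
  have hcard : ({q1, q2, q3, q4, q5, q6, q7} : Finset ℕ).card = 7 := by
    rw [Finset.card_insert_of_notMem (by simp only [Finset.mem_insert, Finset.mem_singleton]; omega),
        Finset.card_insert_of_notMem (by simp only [Finset.mem_insert, Finset.mem_singleton]; omega),
        Finset.card_insert_of_notMem (by simp only [Finset.mem_insert, Finset.mem_singleton]; omega),
        Finset.card_insert_of_notMem (by simp only [Finset.mem_insert, Finset.mem_singleton]; omega),
        Finset.card_insert_of_notMem (by simp only [Finset.mem_insert, Finset.mem_singleton]; omega),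
        Finset.card_insert_of_notMem (by simp only [Finset.mem_singleton]; omega),
        Finset.card_singleton]
  calc 7 = ({q1, q2, q3, q4, q5, q6, q7} : Finset ℕ).card := hcard.symm
    _ ≤ C.card := Finset.card_le_card hsub

theorem statement_19 (n : ℕ) (hn : 0 < n) (hcard : (A n).card = 5)
    (h : IsAP (A n)) : n = 60 ∧ A 60 = ({2, 3, 4, 5, 6} : Finset ℕ) := by
  have hA60 : A 60 = ({2, 3, 4, 5, 6} : Finset ℕ) := by decide
  refine ⟨?_, hA60⟩
  obtain ⟨d, a, hd0, ha0, hAP⟩ := h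
  rw [hcard] at hAP
  have hmemA : ∀ x, x ∈ A n ↔ (x ∣ n ∧ 1 < x ∧ x ^ 2 < n) := by
    intro x
    simp [A, Nat.mem_divisors, hn.ne', and_assoc]
  have hrep : ∀ x ∈ A n, ∃ i ≤ 4, x = d + i * a := by
    intro x hx
    rw [hAP] at hx
    obtain ⟨i, hi, rfl⟩ := Finset.mem_image.mp hx
    exact ⟨i, by simpa using Nat.lt_succ_iff.mp (Finset.mem_range.mp hi), rfl⟩
  have hel : ∀ i ≤ 4, (d + i * a) ∣ n ∧ 1 < d + i * a ∧ (d + i * a) ^ 2 < n := by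
    intro i hi
    rw [← hmemA, hAP]
    exact Finset.mem_image.mpr ⟨i, Finset.mem_range.mpr (by omega), rfl⟩
  have e0 := hel 0 (by norm_num)
  have e1 := hel 1 (by norm_num)
  have e2 := hel 2 (by norm_num)
  have e3 := hel 3 (by norm_num)
  have e4 := hel 4 (by norm_num)
  simp only [Nat.zero_mul, Nat.add_zero, Nat.one_mul] at e0 e1
  -- d is prime
  have hd1 : 1 < d := e0.2.1
  have hp : d.Prime := by
    have hrA : d.minFac ∈ A n := by
      rw [hmemA]
      refine ⟨(Nat.minFac_dvd d).trans e0.1, (Nat.minFac_prime (by omega)).one_lt, ?_⟩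
      have hle : d.minFac ≤ d := Nat.minFac_le (by omega)
      have : d.minFac ^ 2 ≤ d ^ 2 := Nat.pow_le_pow_left hle 2
      omega
    obtain ⟨i, hi, he⟩ := hrep _ hrA
    have hle : d.minFac ≤ d := Nat.minFac_le (by omega)
    have : d.minFac = d := by omega
    exact this ▸ Nat.minFac_prime (by omega)
  by_cases hd2 : d = 2
  · -- d = 2 : show a = 1, then n = 60
    subst hd2
    have hm : (1 + a) ∈ A n := by
      rw [hmemA]
      refine ⟨dvd_trans ⟨2, by ring⟩ e2.1, by omega, ?_⟩
      have h22 := e2.2.2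
      nlinarith
    obtain ⟨i, hi, he⟩ := hrep _ hm
    have ha1 : a = 1 := by
      rcases Nat.eq_zero_or_pos i with rfl | hip
      · omega
      · have := Nat.le_mul_of_pos_left a hip
        omega
    subst ha1
    norm_num at e1 e2 e3
    have h60 : 60 ∣ n := by
      have h12 : 12 ∣ n :=
        Nat.Coprime.mul_dvd_of_dvd_of_dvd (by norm_num) e2.1 e1.1
      exact Nat.Coprime.mul_dvd_of_dvd_of_dvd (by norm_num) h12 e3.1
    by_contra hne
    have hn120 : 120 ≤ n := by omega
    have h10 : (10 : ℕ) ∈ A n := by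
      rw [hmemA]
      exact ⟨dvd_trans (by norm_num) h60, by norm_num, by omega⟩
    obtain ⟨i, hi, he⟩ := hrep _ h10
    have : i * 1 ≤ 4 := by omega
    omega
  · -- d odd prime : derive a contradiction
    exfalso
    have hd3 : 3 ≤ d := by
      have := hp.two_le; omega
    -- n is odd
    have hnodd : ¬ 2 ∣ n := by
      intro h2n
      have h2A : (2 : ℕ) ∈ A n := by
        rw [hmemA]
        refine ⟨h2n, by norm_num, ?_⟩
        have h9 : 3 ^ 2 ≤ d ^ 2 := Nat.pow_le_pow_left hd3 2
        have := e0.2.2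
        omega
      obtain ⟨i, hi, he⟩ := hrep _ h2A
      have : d ≤ 2 + 0 := by omega
      omega
    have hodd : ∀ i ≤ 4, (d + i * a) % 2 = 1 := by
      intro i hi
      rcases Nat.even_or_odd (d + i * a) with he | ho
      · exact absurd (dvd_trans he.two_dvd (hel i hi).1) hnodd
      · exact Nat.odd_iff.mp ho
    have hdo : d % 2 = 1 := by have := hodd 0 (by norm_num); simpa using this
    have hao : a % 2 = 0 := by
      have h1 := hodd 1 (by norm_num)
      simp only [Nat.one_mul] at h1
      omega
    have ha2 : 2 ≤ a := by omega
    -- d does not divide a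
    have hpa : ¬ d ∣ a := by
      rintro ⟨b, hb⟩
      have hb1 : 1 ≤ b := by
        rcases Nat.eq_zero_or_pos b with rfl | h
        · simp at hb; omega
        · exact h
      have h3b : 3 * b ≤ d * b := Nat.mul_le_mul_right b hd3
      have hm : (1 + b) ∈ A n := by
        rw [hmemA]
        refine ⟨dvd_trans ⟨d, by rw [hb]; ring⟩ e1.1, by omega, ?_⟩
        have h11 := e1.2.2
        have hlt : 1 + b < d + a := by omega
        have := Nat.pow_le_pow_left (show 1 + b ≤ d + a by omega) 2
        omega
      obtain ⟨i, hi, he⟩ := hrep _ hm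
      rcases Nat.eq_zero_or_pos i with rfl | hip
      · -- 1 + b = d, so a = d*(d-1); then 2*b+1 ∈ A n gives a contradiction
        simp only [Nat.zero_mul, Nat.add_zero] at he
        have hkey : d + 2 * a = d * (2 * b + 1) := by rw [hb]; ring
        have hm2 : (2 * b + 1) ∈ A n := by
          rw [hmemA]
          refine ⟨dvd_trans ⟨d, by rw [hkey]; ring⟩ e2.1, by omega, ?_⟩
          have h22 := e2.2.2
          have hlt : 2 * b + 1 < d + 2 * a := by omega
          have := Nat.pow_le_pow_left (show 2 * b + 1 ≤ d + 2 * a by omega) 2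
          omega
        obtain ⟨j, hj, hje⟩ := hrep _ hm2
        rcases Nat.eq_zero_or_pos j with rfl | hjp
        · simp only [Nat.zero_mul, Nat.add_zero] at hje
          omega
        · have := Nat.le_mul_of_pos_left a hjp
          omega
      · have := Nat.le_mul_of_pos_left a hip
        omega
    have hcd : Nat.Coprime d a := (Nat.Prime.coprime_iff_not_dvd hp).mpr hpa
    -- each element of the AP is coprime to a
    have hcsa : ∀ i : ℕ, Nat.Coprime (d + i * a) a :=
      fun i => (Nat.coprime_add_mul_right_left d a i).mpr hcd
    -- general lemma for coprimality of two AP elements at distance t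
    have hpair : ∀ i t : ℕ, Nat.Coprime (d + i * a) t →
        Nat.Coprime (d + i * a) (d + (i + t) * a) := by
      intro i t ht
      have h1 : Nat.Coprime (d + i * a) (t * a) := Nat.Coprime.mul_right ht (hcsa i)
      have h2 : Nat.Coprime (d + i * a) (t * a + (d + i * a)) :=
        Nat.coprime_add_self_right.mpr h1
      have heq : t * a + (d + i * a) = d + (i + t) * a := by ring
      rwa [heq] at h2
    have hcop2 : ∀ i ≤ 3, Nat.Coprime (d + i * a) 2 := by
      intro i hi
      have hx := hodd i (by omega)
      have h2x : ¬ (2 ∣ (d + i * a)) := by omega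
      exact (Nat.Coprime.symm ((Nat.Prime.coprime_iff_not_dvd Nat.prime_two).mpr h2x))
    -- 3 does not divide d + a
    have h3s2 : ¬ (3 ∣ (d + a)) := by
      intro h3
      have h3A : (3 : ℕ) ∈ A n := by
        rw [hmemA]
        refine ⟨h3.trans e1.1, by norm_num, ?_⟩
        have h9 : 3 ^ 2 ≤ d ^ 2 := Nat.pow_le_pow_left hd3 2
        have := e0.2.2
        omega
      obtain ⟨i, hi, he⟩ := hrep _ h3A
      have hi0 : i = 0 := by
        rcases Nat.eq_zero_or_pos i with rfl | hip
        · rfl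
        · have := Nat.le_mul_of_pos_left a hip; omega
      subst hi0
      simp only [Nat.zero_mul, Nat.add_zero] at he
      have hd3' : d = 3 := by omega
      apply hpa
      rw [hd3']
      omega
    -- the seven products
    have hcP1 : Nat.Coprime d (d + 2 * a) := by
      have := hpair 0 2 (by simpa using hcop2 0 (by norm_num))
      simpa using this
    have hcP2 : Nat.Coprime (d + 1 * a) (d + (1 + 1) * a) :=
      hpair 1 1 (Nat.coprime_one_right _)
    have hcP3 : Nat.Coprime (d + 1 * a) (d + (1 + 2) * a) :=
      hpair 1 2 (hcop2 1 (by norm_num))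
    have hcP4 : Nat.Coprime (d + 1 * a) (d + (1 + 3) * a) := by
      refine hpair 1 3 ?_
      rw [Nat.coprime_comm]
      refine (Nat.Prime.coprime_iff_not_dvd (by norm_num)).mpr ?_
      simpa using h3s2
    have hcP5 : Nat.Coprime (d + 2 * a) (d + (2 + 1) * a) :=
      hpair 2 1 (Nat.coprime_one_right _)
    have hcP6 : Nat.Coprime (d + 2 * a) (d + (2 + 2) * a) :=
      hpair 2 2 (hcop2 2 (by norm_num))
    have hcP7 : Nat.Coprime (d + 3 * a) (d + (3 + 1) * a) :=
      hpair 3 1 (Nat.coprime_one_right _)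
    norm_num at hcP2 hcP3 hcP4 hcP5 hcP6 hcP7
    -- products divide n
    have hdvd : ∀ i ≤ 4, (d + i * a) ∣ n := fun i hi => (hel i hi).1
    have hP1 : d * (d + 2 * a) ∣ n :=
      Nat.Coprime.mul_dvd_of_dvd_of_dvd hcP1 e0.1 e2.1
    have hP2 : (d + a) * (d + 2 * a) ∣ n :=
      Nat.Coprime.mul_dvd_of_dvd_of_dvd hcP2 e1.1 e2.1
    have hP3 : (d + a) * (d + 3 * a) ∣ n :=
      Nat.Coprime.mul_dvd_of_dvd_of_dvd hcP3 e1.1 e3.1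
    have hP4 : (d + a) * (d + 4 * a) ∣ n :=
      Nat.Coprime.mul_dvd_of_dvd_of_dvd hcP4 e1.1 e4.1
    have hP5 : (d + 2 * a) * (d + 3 * a) ∣ n :=
      Nat.Coprime.mul_dvd_of_dvd_of_dvd hcP5 e2.1 e3.1
    have hP6 : (d + 2 * a) * (d + 4 * a) ∣ n :=
      Nat.Coprime.mul_dvd_of_dvd_of_dvd hcP6 e2.1 e4.1
    have hP7 : (d + 3 * a) * (d + 4 * a) ∣ n :=
      Nat.Coprime.mul_dvd_of_dvd_of_dvd hcP7 e3.1 e4.1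
    -- any divisor larger than d + 4*a has square at least n
    have hbig : ∀ P : ℕ, P ∣ n → d + 4 * a < P → n ≤ P ^ 2 := by
      intro P hPn hPbig
      by_contra hlt
      push_neg at hlt
      have hPA : P ∈ A n := (hmemA P).mpr ⟨hPn, by omega, hlt⟩
      obtain ⟨i, hi, rfl⟩ := hrep _ hPA
      have : i * a ≤ 4 * a := Nat.mul_le_mul_right a hi
      omega
    have hb1 : n ≤ (d * (d + 2 * a)) ^ 2 := hbig _ hP1 (by
      have hq := Nat.mul_le_mul_right (d + 2 * a) (show 3 ≤ d by omega); omega)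
    have hb2 : n ≤ ((d + a) * (d + 2 * a)) ^ 2 := hbig _ hP2 (by
      have hq := Nat.mul_le_mul_right (d + 2 * a) (show 3 ≤ d + a by omega); omega)
    have hb3 : n ≤ ((d + a) * (d + 3 * a)) ^ 2 := hbig _ hP3 (by
      have hq := Nat.mul_le_mul_right (d + 3 * a) (show 3 ≤ d + a by omega); omega)
    have hb4 : n ≤ ((d + a) * (d + 4 * a)) ^ 2 := hbig _ hP4 (by
      have hq := Nat.mul_le_mul_right (d + 4 * a) (show 3 ≤ d + a by omega); omega)
    have hb5 : n ≤ ((d + 2 * a) * (d + 3 * a)) ^ 2 := hbig _ hP5 (by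
      have hq := Nat.mul_le_mul_right (d + 3 * a) (show 3 ≤ d + 2 * a by omega); omega)
    have hb6 : n ≤ ((d + 2 * a) * (d + 4 * a)) ^ 2 := hbig _ hP6 (by
      have hq := Nat.mul_le_mul_right (d + 4 * a) (show 3 ≤ d + 2 * a by omega); omega)
    have hb7 : n ≤ ((d + 3 * a) * (d + 4 * a)) ^ 2 := hbig _ hP7 (by
      have hq := Nat.mul_le_mul_right (d + 4 * a) (show 3 ≤ d + 3 * a by omega); omega)
    -- products are less than n
    have hltn : ∀ x y : ℕ, x ^ 2 < n → y ^ 2 < n → x * y < n := by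
      intro x y hx hy
      by_contra hc
      push_neg at hc
      have h1 : n * n ≤ (x * y) * (x * y) := Nat.mul_le_mul hc hc
      have h2 : x ^ 2 * y ^ 2 < n * n := Nat.mul_lt_mul'' hx hy
      have h3 : (x * y) * (x * y) = x ^ 2 * y ^ 2 := by ring
      omega
    have hl1 : d * (d + 2 * a) < n := hltn _ _ e0.2.2 e2.2.2
    have hl2 : (d + a) * (d + 2 * a) < n := hltn _ _ e1.2.2 e2.2.2
    have hl3 : (d + a) * (d + 3 * a) < n := hltn _ _ e1.2.2 e3.2.2
    have hl4 : (d + a) * (d + 4 * a) < n := hltn _ _ e1.2.2 e4.2.2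
    have hl5 : (d + 2 * a) * (d + 3 * a) < n := hltn _ _ e2.2.2 e3.2.2
    have hl6 : (d + 2 * a) * (d + 4 * a) < n := hltn _ _ e2.2.2 e4.2.2
    have hl7 : (d + 3 * a) * (d + 4 * a) < n := hltn _ _ e3.2.2 e4.2.2
    -- the complement divisors lie in C
    set C : Finset ℕ := n.divisors.filter (fun x => 1 < x ∧ x ^ 2 ≤ n) with hCdef
    have hC : ∀ P : ℕ, P ∣ n → n ≤ P ^ 2 → P < n → n / P ∈ C := by
      intro P hPn hP2 hPltn
      obtain ⟨e, he⟩ := hPn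
      have hP0 : 0 < P := by
        rcases Nat.eq_zero_or_pos P with rfl | h
        · simp at he; omega
        · exact h
      have hdiv : n / P = e := by rw [he, Nat.mul_div_cancel_left _ hP0]
      rw [hdiv]
      have he0 : 0 < e := by
        rcases Nat.eq_zero_or_pos e with rfl | h
        · simp at he; omega
        · exact h
      have hle : e ≤ P := by
        by_contra hc
        push_neg at hc
        have hq : P * P < P * e := mul_lt_mul_of_pos_left hc hP0
        have hq2 : P ^ 2 = P * P := by ring
        omega
      have h1e : 1 < e := by
        have : e ≠ 1 := by rintro rfl; simp at he; omega
        omega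
      have hsq : e ^ 2 ≤ n := by
        have hq : e * e ≤ P * e := Nat.mul_le_mul_right e hle
        have hq2 : e ^ 2 = e * e := by ring
        omega
      exact Finset.mem_filter.mpr
        ⟨Nat.mem_divisors.mpr ⟨⟨P, by rw [he]; ring⟩, hn.ne'⟩, h1e, hsq⟩
    -- C has at most 6 elements
    have hCcard : C.card ≤ 6 := by
      have hsub : C ⊆ insert (Nat.sqrt n) (A n) := by
        intro x hx
        rw [hCdef, Finset.mem_filter] at hx
        rcases lt_or_eq_of_le hx.2.2 with hlt | heq
        · exact Finset.mem_insert_of_mem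
            ((hmemA x).mpr ⟨(Nat.mem_divisors.mp hx.1).1, hx.2.1, hlt⟩)
        · have : Nat.sqrt n = x := by rw [← heq, Nat.sqrt_eq']
          rw [← this]
          exact Finset.mem_insert_self _ _
      have := (Finset.card_le_card hsub).trans (Finset.card_insert_le _ _)
      omega
    -- division reverses strict order on divisors
    have hdivlt : ∀ P Q : ℕ, P ∣ n → Q ∣ n → P < Q → n / Q < n / P := by
      intro P Q hP hQ hPQ
      obtain ⟨eP, heP⟩ := hP
      obtain ⟨eQ, heQ⟩ := hQ
      have hP0 : 0 < P := by
        rcases Nat.eq_zero_or_pos P with rfl | h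
        · simp at heP; omega
        · exact h
      have hQ0 : 0 < Q := by
        rcases Nat.eq_zero_or_pos Q with rfl | h
        · simp at heQ; omega
        · exact h
      have hdivP : n / P = eP := by rw [heP, Nat.mul_div_cancel_left _ hP0]
      have hdivQ : n / Q = eQ := by rw [heQ, Nat.mul_div_cancel_left _ hQ0]
      rw [hdivP, hdivQ]
      have heQ0 : 0 < eQ := by
        rcases Nat.eq_zero_or_pos eQ with rfl | h
        · simp at heQ; omega
        · exact h
      by_contra hc
      push_neg at hc
      have h1 : P * eP ≤ P * eQ := Nat.mul_le_mul_left _ hc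
      have h2 : P * eQ < Q * eQ := mul_lt_mul_of_pos_right hPQ heQ0
      omega
    -- the chain of products
    have hch1 : d * (d + 2 * a) < (d + a) * (d + 2 * a) :=
      mul_lt_mul_of_pos_right (by omega) (by omega)
    have hch2 : (d + a) * (d + 2 * a) < (d + a) * (d + 3 * a) :=
      mul_lt_mul_of_pos_left (by omega) (by omega)
    have hch3 : (d + a) * (d + 3 * a) < (d + a) * (d + 4 * a) :=
      mul_lt_mul_of_pos_left (by omega) (by omega)
    have hch4 : (d + a) * (d + 4 * a) < (d + 2 * a) * (d + 3 * a) := by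
      have hr : (d + a) * (d + 4 * a) + 2 * (a * a) = (d + 2 * a) * (d + 3 * a) := by ring
      have hpos : 0 < a * a := Nat.mul_pos (by omega) (by omega)
      omega
    have hch5 : (d + 2 * a) * (d + 3 * a) < (d + 2 * a) * (d + 4 * a) :=
      mul_lt_mul_of_pos_left (by omega) (by omega)
    have hch6 : (d + 2 * a) * (d + 4 * a) < (d + 3 * a) * (d + 4 * a) :=
      mul_lt_mul_of_pos_right (by omega) (by omega)
    have hfinal := aux_seven
      (hC _ hP7 hb7 hl7) (hC _ hP6 hb6 hl6) (hC _ hP5 hb5 hl5) (hC _ hP4 hb4 hl4)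
      (hC _ hP3 hb3 hl3) (hC _ hP2 hb2 hl2) (hC _ hP1 hb1 hl1)
      (hdivlt _ _ hP6 hP7 hch6) (hdivlt _ _ hP5 hP6 hch5) (hdivlt _ _ hP4 hP5 hch4)
      (hdivlt _ _ hP3 hP4 hch3) (hdivlt _ _ hP2 hP3 hch2) (hdivlt _ _ hP1 hP2 hch1)
    omega
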